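/- Let H = {2^{2i} : i ∈ ω}, K = {2^{2i+1} : i ∈ ω}, and P = { Σ_{j ∈ K} ε_j 2^{-j} : ε ∈ {0,1}^K } ⊆ ℝ. Define Γ : P^H → ℝ by Γ(⟨z_n⟩_{n ∈ H}) = Σ_{n ∈ H} z_n 2^{-n}. Then Γ is injective: if z_n, w_n ∈ P for all n ∈ H and Σ_{n ∈ H} z_n 2^{-n} = Σ_{n ∈ H} w_n 2^{-n}, then z_n = w_n for every n ∈ H. -/

import Mathlib

/-- `H = {2^(2i) : i ∈ ω} = {1, 4, 16, …}`. -/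
def Hset : Set ℕ := {n | ∃ i : ℕ, n = 2 ^ (2 * i)}

/-- `K = {2^(2i+1) : i ∈ ω} = {2, 8, 32, …}`. -/
def Kset : Set ℕ := {n | ∃ i : ℕ, n = 2 ^ (2 * i + 1)}

/-- `P = { Σ_{j ∈ K} ε_j 2^{-j} : ε ∈ {0,1}^K } ⊆ ℝ`. -/
noncomputable def Pset : Set ℝ :=
  {x | ∃ ε : Kset → Bool, x = ∑' j : Kset, (if ε j then (2 : ℝ) ^ (-(j.1 : ℤ)) else 0)}

/-!
Writing `z n = Σ_{j ∈ K} ε n j 2^{-j}`, the number `Γ z = Σ ε n j 2^{-(n+j)}` is a binary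
expansion whose digits sit at the positions `n + j = 2^(2i) + 2^(2k+1)`. These positions are
pairwise distinct (their bits are `2i` and `2k+1`) and all divisible by `3` (as `4 ≡ 1 mod 3`),
so no two of them are adjacent. A binary expansion without two adjacent digits `1` is unique:
the digits beyond a position `t₀` of such an expansion sum to at most `2^{-(t₀+1)} < 2^{-t₀}`.
-/

open Function

noncomputable def binaryValue (A : Set ℕ) : ℝ := ∑' t : A, (1 / 2 : ℝ) ^ (t : ℕ)

lemma binaryValue_mono {A B : Set ℕ} (h : A ⊆ B) : binaryValue A ≤ binaryValue B := by
  rw [binaryValue, binaryValue, tsum_subtype, tsum_subtype]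
  exact summable_geometric_two.indicator A |>.tsum_le_tsum
    (Set.indicator_le_indicator_of_subset h fun _ ↦ by positivity)
    (summable_geometric_two.indicator B)

lemma binaryValue_union {A B : Set ℕ} (h : Disjoint A B) :
    binaryValue (A ∪ B) = binaryValue A + binaryValue B :=
  (summable_geometric_two.subtype A).tsum_union_disjoint h (summable_geometric_two.subtype B)

lemma binaryValue_singleton (t : ℕ) : binaryValue {t} = (1 / 2) ^ t :=
  tsum_singleton t _

lemma binaryValue_Ici (m : ℕ) : binaryValue (Set.Ici m) = 2 * (1 / 2) ^ m := by
  have hIci : Set.Ici m = Set.range (· + m) := by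
    simpa using (Set.range_add_eq_image_Ici (f := id) (k := m)).symm
  rw [binaryValue, hIci, tsum_range _ (add_left_injective m)]
  simp only [pow_add, tsum_mul_right, tsum_geometric_two]

lemma binaryValue_lt_binaryValue {A B : Set ℕ} {t₀ : ℕ} (hA : t₀ ∈ A) (hB : t₀ ∉ B)
    (hB' : t₀ + 1 ∉ B) (hbelow : ∀ t < t₀, t ∈ B ↔ t ∈ A) :
    binaryValue B < binaryValue A := by
  set C := A ∩ Set.Iio t₀
  have hB_sub : B ⊆ C ∪ Set.Ici (t₀ + 2) := by
    intro t ht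
    by_cases hlt : t < t₀
    · exact Or.inl ⟨(hbelow t hlt).1 ht, hlt⟩
    · have : t ≠ t₀ := fun h ↦ hB (h ▸ ht)
      have : t ≠ t₀ + 1 := fun h ↦ hB' (h ▸ ht)
      exact Or.inr (show t₀ + 2 ≤ t by omega)
  have hC_Ici : Disjoint C (Set.Ici (t₀ + 2)) :=
    Set.disjoint_left.2 fun t ⟨_, (ht : t < t₀)⟩ (ht' : t₀ + 2 ≤ t) ↦ by omega
  have hC_t₀ : Disjoint C {t₀} := by simp [C]
  calc binaryValue B ≤ binaryValue (C ∪ Set.Ici (t₀ + 2)) := binaryValue_mono hB_sub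
    _ = binaryValue C + 2 * (1 / 2) ^ (t₀ + 2) := by
      rw [binaryValue_union hC_Ici, binaryValue_Ici]
    _ < binaryValue C + (1 / 2) ^ t₀ := by
      have : (0 : ℝ) < (1 / 2) ^ t₀ := by positivity
      rw [pow_add]; linarith
    _ = binaryValue (C ∪ {t₀}) := by rw [binaryValue_union hC_t₀, binaryValue_singleton]
    _ ≤ binaryValue A :=
      binaryValue_mono (Set.union_subset Set.inter_subset_left (Set.singleton_subset_iff.2 hA))

lemma binaryValue_injOn {S : Set ℕ} (hS : ∀ t ∈ S, t + 1 ∉ S) :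
    Set.InjOn binaryValue (𝒫 S) := by
  classical
  intro A hA B hB h
  by_contra hne
  have hex : ∃ t, ¬(t ∈ A ↔ t ∈ B) := not_forall.1 (mt Set.ext hne)
  set t₀ := Nat.find hex
  have hbelow (t : ℕ) (ht : t < t₀) : t ∈ A ↔ t ∈ B := not_not.1 (Nat.find_min hex ht)
  by_cases hA₀ : t₀ ∈ A
  · have hB₀ : t₀ ∉ B := fun hB₀ ↦ Nat.find_spec hex (iff_of_true hA₀ hB₀)
    exact (binaryValue_lt_binaryValue hA₀ hB₀ (fun h ↦ hS t₀ (hA hA₀) (hB h))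
      fun t ht ↦ (hbelow t ht).symm).ne h.symm
  · have hB₀ : t₀ ∈ B := not_not.1 fun hB₀ ↦ Nat.find_spec hex (iff_of_false hA₀ hB₀)
    exact (binaryValue_lt_binaryValue hB₀ hA₀ (fun h ↦ hS t₀ (hB hB₀) (hA h)) hbelow).ne h

lemma two_pow_even_add_two_pow_odd_inj {i k i' k' : ℕ}
    (h : 2 ^ (2 * i) + 2 ^ (2 * k + 1) = 2 ^ (2 * i') + 2 ^ (2 * k' + 1)) :
    i = i' ∧ k = k' := by
  have hsum (i k : ℕ) : 2 ^ (2 * i) + 2 ^ (2 * k + 1) = ∑ x ∈ {2 * i, 2 * k + 1}, 2 ^ x :=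
    (Finset.sum_pair (by omega)).symm
  have hbits : ({2 * i, 2 * k + 1} : Finset ℕ) = {2 * i', 2 * k' + 1} :=
    Finset.geomSum_injective le_rfl (by simpa only [hsum] using h)
  have hi : 2 * i ∈ ({2 * i', 2 * k' + 1} : Finset ℕ) := hbits ▸ by simp
  have hk : 2 * k + 1 ∈ ({2 * i', 2 * k' + 1} : Finset ℕ) := hbits ▸ by simp
  simp only [Finset.mem_insert, Finset.mem_singleton] at hi hk
  omega

lemma three_dvd_two_pow_even_add_two_pow_odd (i k : ℕ) : 3 ∣ 2 ^ (2 * i) + 2 ^ (2 * k + 1) := by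
  have h4 : 2 ^ 2 ≡ 1 [MOD 3] := rfl
  rw [pow_succ, pow_mul, pow_mul, ← Nat.modEq_zero_iff_dvd]
  exact ((h4.pow i).add ((h4.pow k).mul_right 2)).trans (by simp [Nat.ModEq])

def pairSum (x : Hset × Kset) : ℕ := x.1 + x.2

lemma pairSum_injective : Injective pairSum := by
  rintro ⟨⟨_, i, rfl⟩, ⟨_, k, rfl⟩⟩ ⟨⟨_, i', rfl⟩, ⟨_, k', rfl⟩⟩ h
  obtain ⟨rfl, rfl⟩ := two_pow_even_add_two_pow_odd_inj h
  rfl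

lemma three_dvd_pairSum : ∀ x, 3 ∣ pairSum x := by
  rintro ⟨⟨_, i, rfl⟩, ⟨_, k, rfl⟩⟩
  exact three_dvd_two_pow_even_add_two_pow_odd i k

lemma two_zpow_neg_natCast (m : ℕ) : (2 : ℝ) ^ (-(m : ℤ)) = (1 / 2) ^ m := by
  rw [zpow_neg, zpow_natCast, one_div, inv_pow]

lemma tsum_digits_mul_eq_binaryValue (ε : Hset → Kset → Bool) :
    ∑' n : Hset, (∑' j : Kset, if ε n j then (2 : ℝ) ^ (-(j.1 : ℤ)) else 0) *
      (2 : ℝ) ^ (-(n.1 : ℤ)) = binaryValue (pairSum '' {x | ε x.1 x.2}) := by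
  set E : Set (Hset × Kset) := {x | ε x.1 x.2}
  have hterm (n : Hset) (j : Kset) :
      (if ε n j then (2 : ℝ) ^ (-(j.1 : ℤ)) else 0) * (2 : ℝ) ^ (-(n.1 : ℤ)) =
        E.indicator (fun x ↦ (1 / 2 : ℝ) ^ pairSum x) (n, j) := by
    simp only [Set.indicator_apply, E, Set.mem_ofPred_eq, ite_mul, zero_mul,
      two_zpow_neg_natCast, ← pow_add, pairSum, add_comm (j : ℕ)]
  have hsummable : Summable (E.indicator fun x ↦ (1 / 2 : ℝ) ^ pairSum x) :=
    (summable_geometric_two.comp_injective pairSum_injective).indicator E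
  rw [binaryValue, tsum_image _ pairSum_injective.injOn,
    tsum_subtype E (fun x ↦ (1 / 2 : ℝ) ^ pairSum x), hsummable.tsum_prod]
  exact tsum_congr fun n ↦ by rw [← tsum_mul_right]; exact tsum_congr (hterm n)

/-- `Γ` is injective: if `z_n, w_n ∈ P` for all `n ∈ H` and
`Σ_{n ∈ H} z_n 2^{-n} = Σ_{n ∈ H} w_n 2^{-n}`, then `z_n = w_n` for all `n ∈ H`. -/
theorem Gamma_injective (z w : Hset → ℝ)
    (hz : ∀ n, z n ∈ Pset) (hw : ∀ n, w n ∈ Pset)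
    (h : ∑' n : Hset, z n * (2 : ℝ) ^ (-(n.1 : ℤ)) =
         ∑' n : Hset, w n * (2 : ℝ) ^ (-(n.1 : ℤ))) :
    ∀ n, z n = w n := by
  choose ε hε using hz
  choose δ hδ using hw
  have hpos : pairSum '' {x | ε x.1 x.2} = pairSum '' {x | δ x.1 x.2} := by
    have hS : ∀ t ∈ {t : ℕ | 3 ∣ t}, t + 1 ∉ {t : ℕ | 3 ∣ t} := fun t ht ht' ↦ by
      simp only [Set.mem_ofPred_eq] at ht ht'; omega
    refine binaryValue_injOn hS (Set.image_subset_iff.2 fun x _ ↦ three_dvd_pairSum x)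
      (Set.image_subset_iff.2 fun x _ ↦ three_dvd_pairSum x) ?_
    simp only [hε, hδ] at h
    rwa [← tsum_digits_mul_eq_binaryValue, ← tsum_digits_mul_eq_binaryValue]
  have hεδ : ε = δ := funext₂ fun n j ↦
    Bool.eq_iff_iff.2 (Set.ext_iff.1 (Set.image_injective.2 pairSum_injective hpos) (n, j))
  intro n
  rw [hε, hδ, hεδ]
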